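/- arXiv:1403.7812 — 2 statements merged into one kernel-verified Lean document; each statement's English description precedes it below -/
import Mathlib

section
/- Under the bivariate exponential frailty model with parameter ρ ∈ [0,1], the covariance of the two binary outcomes is Cov(Y₁, Y₂) = [(1-ρ)e^{-(η₁+η₂)} + e^{-η₁} + e^{-η₂} + 1]^{-1} - [1/(1+e^{-η₁})]·[1/(1+e^{-η₂})], where ηⱼ = xⱼ^Tβ. Moreover Cov(Y₁, Y₂) ≥ 0, with equality if and only if ρ = 0. -/
open MeasureTheory Real

/-- Covariance of the two binary outcomes under the bivariate exponential
frailty model: it equals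
`p₁₂ - (1+e^{-η₁})⁻¹ (1+e^{-η₂})⁻¹`, is nonnegative, and vanishes iff `ρ = 0`. -/
theorem bivariate_binary_covariance
    {Ω : Type*} [MeasurableSpace Ω] (P : Measure Ω) [IsProbabilityMeasure P]
    (Y₁ Y₂ : Ω → ℝ) (η₁ η₂ ρ : ℝ) (hρ : ρ ∈ Set.Icc (0 : ℝ) 1)
    (hmean₁ : ∫ ω, Y₁ ω ∂P = Real.exp η₁ / (1 + Real.exp η₁))
    (hmean₂ : ∫ ω, Y₂ ω ∂P = Real.exp η₂ / (1 + Real.exp η₂))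
    (hjoint : ∫ ω, Y₁ ω * Y₂ ω ∂P
      = ((1 - ρ) * Real.exp (-η₁ - η₂) + Real.exp (-η₁) + Real.exp (-η₂) + 1)⁻¹) :
    ((∫ ω, Y₁ ω * Y₂ ω ∂P) - (∫ ω, Y₁ ω ∂P) * (∫ ω, Y₂ ω ∂P)
        = ((1 - ρ) * Real.exp (-η₁ - η₂) + Real.exp (-η₁) + Real.exp (-η₂) + 1)⁻¹
          - (1 + Real.exp (-η₁))⁻¹ * (1 + Real.exp (-η₂))⁻¹) ∧
    (0 ≤ (∫ ω, Y₁ ω * Y₂ ω ∂P) - (∫ ω, Y₁ ω ∂P) * (∫ ω, Y₂ ω ∂P)) ∧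
    ((∫ ω, Y₁ ω * Y₂ ω ∂P) - (∫ ω, Y₁ ω ∂P) * (∫ ω, Y₂ ω ∂P) = 0 ↔ ρ = 0) := by
  obtain ⟨hρ0, hρ1⟩ := hρ
  have hap : 0 < Real.exp (-η₁) := Real.exp_pos _
  have hbp : 0 < Real.exp (-η₂) := Real.exp_pos _
  set a := Real.exp (-η₁) with ha
  set b := Real.exp (-η₂) with hb
  have hab : Real.exp (-η₁ - η₂) = a * b := by
    rw [ha, hb, ← Real.exp_add]; ring_nf
  have he1 : Real.exp η₁ = a⁻¹ := by rw [ha, Real.exp_neg, inv_inv]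
  have he2 : Real.exp η₂ = b⁻¹ := by rw [hb, Real.exp_neg, inv_inv]
  have h1 : Real.exp η₁ / (1 + Real.exp η₁) = (1 + a)⁻¹ := by
    rw [he1]; field_simp; ring
  have h2 : Real.exp η₂ / (1 + Real.exp η₂) = (1 + b)⁻¹ := by
    rw [he2]; field_simp; ring
  have hD : 0 < (1 - ρ) * (a * b) + a + b + 1 := by nlinarith [mul_pos hap hbp]
  have hA : 0 < 1 + a := by linarith
  have hB : 0 < 1 + b := by linarith
  rw [hjoint, hmean₁, hmean₂, hab, h1, h2]
  have key : ((1 - ρ) * (a * b) + a + b + 1)⁻¹ - (1 + a)⁻¹ * (1 + b)⁻¹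
      = ρ * (a * b) / (((1 - ρ) * (a * b) + a + b + 1) * ((1 + a) * (1 + b))) := by
    field_simp
    ring
  refine ⟨rfl, ?_, ?_⟩
  · rw [key]
    apply div_nonneg
    · positivity
    · positivity
  · rw [key, div_eq_zero_iff]
    constructor
    · rintro (h | h)
      · rcases mul_eq_zero.mp h with h' | h'
        · exact h'
        · nlinarith [mul_pos hap hbp]
      · nlinarith [mul_pos hD (mul_pos hA hB)]
    · intro h; left; rw [h, zero_mul]
end

section
/- For fixed η₁, η₂ ∈ ℝ, the joint probability p₁₂(ρ) = [(1-ρ)e^{-η₁-η₂} + e^{-η₁} + e^{-η₂} + 1]^{-1} is a strictly increasing continuous function of ρ on [0,1], with p₁₂(0) = p₁ p₂ (where pⱼ = (1+e^{-ηⱼ})^{-1}) and p₁₂(1) = (e^{-η₁} + e^{-η₂} + 1)^{-1}. In particular, the map ρ ↦ p₁₂(ρ) is injective, so ρ is identifiable from pairwise joint probabilities. -/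
open Real

/-- `ρ ↦ p₁₂(ρ) = ((1-ρ)e^{-η₁-η₂} + e^{-η₁} + e^{-η₂} + 1)⁻¹` is strictly
increasing and continuous on `[0,1]`, with `p₁₂(0) = p₁ p₂` and
`p₁₂(1) = (e^{-η₁} + e^{-η₂} + 1)⁻¹`; in particular it is injective on `[0,1]`,
so `ρ` is identifiable from the pairwise joint probability. -/
theorem joint_prob_strictMono (η₁ η₂ : ℝ) :
    let p₁₂ : ℝ → ℝ := fun ρ =>
      ((1 - ρ) * Real.exp (-η₁ - η₂) + Real.exp (-η₁) + Real.exp (-η₂) + 1)⁻¹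
    StrictMonoOn p₁₂ (Set.Icc 0 1) ∧
    ContinuousOn p₁₂ (Set.Icc 0 1) ∧
    p₁₂ 0 = (1 + Real.exp (-η₁))⁻¹ * (1 + Real.exp (-η₂))⁻¹ ∧
    p₁₂ 1 = (Real.exp (-η₁) + Real.exp (-η₂) + 1)⁻¹ ∧
    Set.InjOn p₁₂ (Set.Icc 0 1) := by
  intro p₁₂
  have hE : 0 < Real.exp (-η₁ - η₂) := Real.exp_pos _
  have hA : 0 < Real.exp (-η₁) := Real.exp_pos _
  have hB : 0 < Real.exp (-η₂) := Real.exp_pos _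
  have hD : ∀ ρ ∈ Set.Icc (0:ℝ) 1,
      0 < (1 - ρ) * Real.exp (-η₁ - η₂) + Real.exp (-η₁) + Real.exp (-η₂) + 1 := by
    intro ρ hρ
    have : 0 ≤ (1 - ρ) * Real.exp (-η₁ - η₂) :=
      mul_nonneg (by linarith [hρ.2]) hE.le
    linarith
  have hmono : StrictMonoOn p₁₂ (Set.Icc 0 1) := by
    intro x hx y hy hxy
    have hdx := hD x hx
    have hdy := hD y hy
    have hlt : (1 - y) * Real.exp (-η₁ - η₂) + Real.exp (-η₁) + Real.exp (-η₂) + 1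
        < (1 - x) * Real.exp (-η₁ - η₂) + Real.exp (-η₁) + Real.exp (-η₂) + 1 := by
      have := mul_lt_mul_of_pos_right (show 1 - y < 1 - x by linarith) hE
      linarith
    exact inv_strictAnti₀ hdy hlt
  refine ⟨hmono, ?_, ?_, ?_, hmono.injOn⟩
  · apply ContinuousOn.inv₀
    · fun_prop
    · intro ρ hρ; exact (hD ρ hρ).ne'
  · show ((1 - 0) * Real.exp (-η₁ - η₂) + Real.exp (-η₁) + Real.exp (-η₂) + 1)⁻¹ = _
    rw [← mul_inv]
    congr 1
    have : Real.exp (-η₁ - η₂) = Real.exp (-η₁) * Real.exp (-η₂) := by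
      rw [← Real.exp_add]; ring_nf
    rw [this]; ring
  · show ((1 - 1) * Real.exp (-η₁ - η₂) + Real.exp (-η₁) + Real.exp (-η₂) + 1)⁻¹ = _
    ring_nf
end
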